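/- arXiv:quant-ph/0201144 — 7 statements merged into one kernel-verified Lean document; each statement's English description precedes it below -/
import Mathlib

section
/- Let n be a positive integer, let Δ be an integer with 1 ≤ Δ ≤ n, and let x : Fin n → ℤ with x i ∈ {0,1} for every i. For each k with 0 ≤ k < Δ define y k = (if (∑ i, x i) - k = 0 then 0 else 1). Then the equality threshold gate applied to the y k together with a constant input of weight 1 - Δ computes the threshold gate: (if (∑_{k=0}^{Δ-1} y k) + (1 - Δ) = 0 then 0 else 1) = (if (∑ i, x i) ≥ Δ then 1 else 0). Equivalently, ∑_{k=0}^{Δ-1} y k equals Δ when ∑ i, x i ≥ Δ and equals Δ - 1 otherwise. -/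
/-!
Each `y k` is `1` except for `k = ∑ i, x i`, so `∑_{k < Δ} y k` equals `Δ` minus one exactly
when the (nonnegative) input weight lies in `[0, Δ)`, i.e. when the threshold is not reached.
The equality gate with bias `1 - Δ` then fires precisely when that sum is `Δ`.
-/

open Finset

theorem sum_Ico_ite_sub_eq_zero (s a b : ℤ) (hab : a ≤ b) :
    ∑ k ∈ Ico a b, (if s - k = 0 then (0 : ℤ) else 1) = b - a - if s ∈ Ico a b then 1 else 0 := by
  have hcard : ((Ico a b).card : ℤ) = b - a := by
    rw [Int.card_Ico, Int.toNat_of_nonneg (sub_nonneg.mpr hab)]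
  have hterm : ∀ k, (if s - k = 0 then (0 : ℤ) else 1) = 1 - if s = k then 1 else 0 := by
    intro k
    by_cases h : s = k <;> simp [h, sub_eq_zero]
  rw [sum_congr rfl fun k _ => hterm k, sum_sub_distrib, sum_ite_eq, sum_const, nsmul_one, hcard]

theorem sum_Ico_zero_ite_sub_eq_zero {s Δ : ℤ} (hs : 0 ≤ s) (hΔ : 0 ≤ Δ) :
    ∑ k ∈ Ico 0 Δ, (if s - k = 0 then (0 : ℤ) else 1) = if Δ ≤ s then Δ else Δ - 1 := by
  rw [sum_Ico_ite_sub_eq_zero s 0 Δ hΔ]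
  split_ifs with hmem <;> rw [mem_Ico] at hmem <;> omega

theorem threshold_gate_by_equality_circuit_general
    (n : ℕ) (Δ : ℤ) (hΔ1 : 1 ≤ Δ)
    (x : Fin n → ℤ) (hx : ∀ i, x i = 0 ∨ x i = 1)
    (y : ℤ → ℤ) (hy : ∀ k, y k = if (∑ i, x i) - k = 0 then 0 else 1) :
    (if (∑ k ∈ Finset.Ico (0 : ℤ) Δ, y k) + (1 - Δ) = 0 then (0 : ℤ) else 1)
      = (if (∑ i, x i) ≥ Δ then 1 else 0) ∧
    (∑ k ∈ Finset.Ico (0 : ℤ) Δ, y k)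
      = (if (∑ i, x i) ≥ Δ then Δ else Δ - 1) := by
  have hS : 0 ≤ ∑ i, x i := sum_nonneg fun i _ => by rcases hx i with h | h <;> simp [h]
  have hsum : ∑ k ∈ Ico (0 : ℤ) Δ, y k = if Δ ≤ ∑ i, x i then Δ else Δ - 1 := by
    rw [sum_congr rfl fun k _ => hy k]
    exact sum_Ico_zero_ite_sub_eq_zero hS (by omega)
  rw [hsum]
  refine ⟨?_, rfl⟩
  split_ifs <;> omega

theorem threshold_gate_by_equality_circuit
    (n : ℕ) (hn : 0 < n) (Δ : ℤ) (hΔ1 : 1 ≤ Δ) (hΔn : Δ ≤ n)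
    (x : Fin n → ℤ) (hx : ∀ i, x i = 0 ∨ x i = 1)
    (y : ℤ → ℤ) (hy : ∀ k, y k = if (∑ i, x i) - k = 0 then 0 else 1) :
    (if (∑ k ∈ Finset.Ico (0 : ℤ) Δ, y k) + (1 - Δ) = 0 then (0 : ℤ) else 1)
      = (if (∑ i, x i) ≥ Δ then 1 else 0) ∧
    (∑ k ∈ Finset.Ico (0 : ℤ) Δ, y k)
      = (if (∑ i, x i) ≥ Δ then Δ else Δ - 1) :=
  threshold_gate_by_equality_circuit_general n Δ hΔ1 x hx y hy
end

section
/- Let x₁, x₂ ∈ ℝ with x₁ ∈ {0,1} and x₂ ∈ {0,1}, and let X = (1/2) • (x₁, 1, x₂, 1) ∈ ℝ⁴. Then the component of U_nand.mulVec X at index 0 (the amplitude of state |00⟩) equals (x₁ + x₂ - 2)/(2√6), and this amplitude is 0 if and only if x₁ = 1 and x₂ = 1, i.e., if and only if NAND(x₁,x₂) = 0. -/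
noncomputable def Unand : Matrix (Fin 4) (Fin 4) ℝ :=
  !![1 / Real.sqrt 6, 0, 1 / Real.sqrt 6, -2 / Real.sqrt 6;
     1 / Real.sqrt 3, 1 / Real.sqrt 3, -1 / Real.sqrt 3, 0;
     1 / (3 * Real.sqrt 2), Real.sqrt 2 / 3, 1 / Real.sqrt 2, Real.sqrt 2 / 3;
     2 / 3, -2 / 3, 0, 1 / 3]

theorem Unand_mulVec_apply_zero (v : Fin 4 → ℝ) :
    Unand.mulVec v 0 = (v 0 + v 2 - 2 * v 3) / Real.sqrt 6 := by
  simp only [Unand, Matrix.mulVec, dotProduct, Fin.sum_univ_four, Matrix.of_apply,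
    Matrix.cons_val', Matrix.cons_val_fin_one, Matrix.cons_val_zero, Matrix.cons_val_one,
    Matrix.cons_val]
  ring

theorem Unand_computes_nand
    (x₁ x₂ : ℝ) (h₁ : x₁ = 0 ∨ x₁ = 1) (h₂ : x₂ = 0 ∨ x₂ = 1)
    (X : Fin 4 → ℝ) (hX : X = (1 / 2 : ℝ) • ![x₁, 1, x₂, 1]) :
    Unand.mulVec X 0 = (x₁ + x₂ - 2) / (2 * Real.sqrt 6) ∧
    (Unand.mulVec X 0 = 0 ↔ x₁ = 1 ∧ x₂ = 1) := by
  have amplitude : Unand.mulVec X 0 = (x₁ + x₂ - 2) / (2 * Real.sqrt 6) := by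
    rw [Unand_mulVec_apply_zero, hX]
    simp only [Pi.smul_apply, smul_eq_mul, Matrix.cons_val_zero, Matrix.cons_val_two,
      Matrix.cons_val_three, Matrix.tail_cons, Matrix.head_cons]
    field_simp
  have hx₁ : x₁ ≤ 1 := by rcases h₁ with rfl | rfl <;> norm_num
  have hx₂ : x₂ ≤ 1 := by rcases h₂ with rfl | rfl <;> norm_num
  refine ⟨amplitude, ?_⟩
  have hden : 2 * Real.sqrt 6 ≠ 0 := by positivity
  rw [amplitude, div_eq_zero_iff, or_iff_left hden, sub_eq_zero, ← one_add_one_eq_two]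
  exact add_eq_add_iff_eq_and_eq hx₁ hx₂
end

section
/- Let R > 0 and 0 < δ < 1 be real numbers, and let a : ℝ → ℝ satisfy a'(t) = R · a(t) · (a(t) - δ) · (1 - a(t)) for all t ≥ 0 (in the sense of HasDerivAt), with 0 < a(0) < δ. Then a(t) tends to 0 as t → ∞ (Tendsto a atTop (𝓝 0)). -/
/-! The endpoints `0` and `δ` are equilibria, so by uniqueness of solutions `a` never reaches
them and stays in `(0, δ)`, where the vector field is negative. Hence `a` decreases to a limit,
at which the vector field must vanish; the only such point in `[0, δ)` is `0`. -/

open Filter Topology Set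

theorem AntitoneOn.exists_tendsto_atTop {a : ℝ → ℝ} {t₀ : ℝ} (h : AntitoneOn a (Ici t₀))
    (hb : BddBelow (a '' Ici t₀)) : ∃ L, Tendsto a atTop (𝓝 L) := by
  have hb' : BddBelow (range fun t : Ici t₀ => a t) := by rwa [← image_eq_range]
  exact ⟨_, tendsto_comp_val_Ici_atTop.mp
    (tendsto_atTop_ciInf (fun (s t : Ici t₀) hst => h s.2 t.2 hst) hb')⟩

theorem eq_zero_of_tendsto_of_hasDerivAt_tendsto {a a' : ℝ → ℝ} {L m : ℝ}
    (hd : ∀ᶠ t in atTop, HasDerivAt a (a' t) t) (ha : Tendsto a atTop (𝓝 L))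
    (ha' : Tendsto a' atTop (𝓝 m)) : m = 0 := by
  obtain ⟨T, hT⟩ := eventually_atTop.mp hd
  have hslope (t : ℝ) : ∃ ξ ∈ Ioo (max t T) (max t T + 1),
      a' ξ = a (max t T + 1) - a (max t T) := by
    have hderiv : ∀ x ∈ Icc (max t T) (max t T + 1), HasDerivAt a (a' x) x :=
      fun x hx => hT x ((le_max_right t T).trans hx.1)
    simpa using exists_hasDerivAt_eq_slope a a' (lt_add_one _)
      (HasDerivAt.continuousOn hderiv) fun x hx => hderiv x (Ioo_subset_Icc_self hx)
  choose ξ hξ hξ_eq using hslope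
  have hmax : Tendsto (fun t => max t T) atTop atTop :=
    tendsto_atTop_mono (le_max_left · T) tendsto_id
  have hξ_top : Tendsto ξ atTop atTop :=
    tendsto_atTop_mono (fun t => (le_max_left t T).trans (hξ t).1.le) tendsto_id
  have hdiff : Tendsto (fun t => a' (ξ t)) atTop (𝓝 0) := by
    simp_rw [hξ_eq]
    simpa using (ha.comp (tendsto_atTop_add_const_right _ 1 hmax)).sub (ha.comp hmax)
  exact tendsto_nhds_unique (ha'.comp hξ_top) hdiff

/-- Uniqueness run backwards from the hitting time identifies the solution with the constant
one. -/
theorem ne_of_hasDerivAt_of_apply_eq_zero {f a : ℝ → ℝ} {p t₀ t : ℝ} (hf : LocallyLipschitz f)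
    (hp : f p = 0) (ha : ∀ s, t₀ ≤ s → HasDerivAt a (f (a s)) s) (h₀ : a t₀ ≠ p)
    (ht : t₀ ≤ t) : a t ≠ p := by
  intro hat
  have hc : ContinuousOn a (Icc t₀ t) := HasDerivAt.continuousOn fun s hs => ha s hs.1
  obtain ⟨K, hK⟩ := hf.locallyLipschitzOn.exists_lipschitzOnWith_of_compact
    ((isCompact_Icc.image_of_continuousOn hc).insert p)
  have hEq : EqOn a (fun _ => p) (Icc t₀ t) :=
    ODE_solution_unique_of_mem_Icc_left (v := fun _ => f) (fun _ _ => hK) hc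
      (fun s hs => (ha s hs.1.le).hasDerivWithinAt)
      (fun s hs => mem_insert_of_mem _ (mem_image_of_mem a (Ioc_subset_Icc_self hs)))
      continuousOn_const (fun s _ => by simpa [hp] using hasDerivWithinAt_const s _ p)
      (fun _ _ => mem_insert p _) hat
  exact h₀ (hEq ⟨le_rfl, ht⟩)

theorem mem_Ioo_of_forall_ne {a : ℝ → ℝ} {p q t₀ t : ℝ} (hc : ContinuousOn a (Ici t₀))
    (h₀ : a t₀ ∈ Ioo p q) (hp : ∀ s, t₀ ≤ s → a s ≠ p) (hq : ∀ s, t₀ ≤ s → a s ≠ q)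
    (ht : t₀ ≤ t) : a t ∈ Ioo p q := by
  have hconn : IsPreconnected (a '' Ici t₀) := isPreconnected_Ici.image a hc
  have hmem : ∀ x ∈ a '' Ici t₀, x ≠ p ∧ x ≠ q := by
    rintro _ ⟨s, hs, rfl⟩
    exact ⟨hp s hs, hq s hs⟩
  have h₀' : a t₀ ∈ a '' Ici t₀ := mem_image_of_mem a self_mem_Ici
  have ht' : a t ∈ a '' Ici t₀ := mem_image_of_mem a ht
  by_contra hout
  rcases not_and_or.mp hout with hle | hge
  · exact (hmem p (hconn.Icc_subset ht' h₀' ⟨not_lt.mp hle, h₀.1.le⟩)).1 rfl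
  · exact (hmem q (hconn.Icc_subset h₀' ht' ⟨h₀.2.le, not_lt.mp hge⟩)).2 rfl

theorem mem_Ioo_of_hasDerivAt_of_apply_eq_zero {f a : ℝ → ℝ} {p q t₀ t : ℝ}
    (hf : LocallyLipschitz f) (hp : f p = 0) (hq : f q = 0)
    (ha : ∀ s, t₀ ≤ s → HasDerivAt a (f (a s)) s) (h₀ : a t₀ ∈ Ioo p q) (ht : t₀ ≤ t) :
    a t ∈ Ioo p q :=
  mem_Ioo_of_forall_ne (HasDerivAt.continuousOn fun s hs => ha s hs) h₀
    (fun _ hs => ne_of_hasDerivAt_of_apply_eq_zero hf hp ha h₀.1.ne' hs)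
    (fun _ hs => ne_of_hasDerivAt_of_apply_eq_zero hf hq ha h₀.2.ne hs) ht

theorem Dgate_converges_to_zero_general
    (R δ : ℝ) (hR : 0 < R) (hδ1 : δ < 1)
    (a : ℝ → ℝ)
    (ha : ∀ t : ℝ, 0 ≤ t → HasDerivAt a (R * a t * (a t - δ) * (1 - a t)) t)
    (h0 : 0 < a 0) (h0' : a 0 < δ) :
    Tendsto a atTop (𝓝 0) := by
  set f : ℝ → ℝ := fun x => R * x * (x - δ) * (1 - x)
  have hf : LocallyLipschitz f := (by fun_prop : ContDiff ℝ 1 f).locallyLipschitz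
  have hbound (t : ℝ) (ht : 0 ≤ t) : a t ∈ Ioo 0 δ :=
    mem_Ioo_of_hasDerivAt_of_apply_eq_zero hf (by simp [f]) (by simp [f]) ha ⟨h0, h0'⟩ ht
  have hneg (x : ℝ) (hx : x ∈ Ioo 0 δ) : f x < 0 :=
    mul_neg_of_neg_of_pos (mul_neg_of_pos_of_neg (mul_pos hR hx.1) (sub_neg.mpr hx.2))
      (sub_pos.mpr (hx.2.trans hδ1))
  have hanti : AntitoneOn a (Ici 0) :=
    antitoneOn_of_hasDerivWithinAt_nonpos (convex_Ici 0) (HasDerivAt.continuousOn ha)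
      (fun t ht => (ha t (interior_subset ht)).hasDerivWithinAt)
      fun t ht => (hneg _ (hbound t (interior_subset ht))).le
  obtain ⟨L, hL⟩ := hanti.exists_tendsto_atTop ⟨0, fun _ ⟨t, ht, hat⟩ => hat ▸ (hbound t ht).1.le⟩
  have hL0 : 0 ≤ L := ge_of_tendsto hL (eventually_atTop.mpr ⟨0, fun t ht => (hbound t ht).1.le⟩)
  have hLδ : L < δ := (le_of_tendsto hL (eventually_atTop.mpr
    ⟨0, fun t ht => hanti self_mem_Ici ht ht⟩)).trans_lt h0'
  have hfL : f L = 0 := eq_zero_of_tendsto_of_hasDerivAt_tendsto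
    (eventually_atTop.mpr ⟨0, ha⟩) hL ((hf.continuous.tendsto L).comp hL)
  rcases hL0.eq_or_lt with rfl | hLpos
  · exact hL
  · exact absurd hfL (hneg L ⟨hLpos, hLδ⟩).ne

theorem Dgate_converges_to_zero
    (R δ : ℝ) (hR : 0 < R) (hδ0 : 0 < δ) (hδ1 : δ < 1)
    (a : ℝ → ℝ)
    (ha : ∀ t : ℝ, 0 ≤ t → HasDerivAt a (R * a t * (a t - δ) * (1 - a t)) t)
    (h0 : 0 < a 0) (h0' : a 0 < δ) :
    Tendsto a atTop (𝓝 0) :=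
  Dgate_converges_to_zero_general R δ hR hδ1 a ha h0 h0'
end

section
/- Let R > 0 and 0 < δ < 1 be real numbers, and let a : ℝ → ℝ satisfy a'(t) = R · a(t) · (a(t) - δ) · (1 - a(t)) for all t ≥ 0 (in the sense of HasDerivAt), with δ < a(0) < 1. Then a(t) tends to 1 as t → ∞ (Tendsto a atTop (𝓝 1)). -/
/-!
The field `f y = R y (y - δ)(1 - y)` is locally Lipschitz and vanishes at `δ` and `1`, so by
uniqueness of solutions the trajectory can never reach either equilibrium and stays in `(δ, 1)`,
where `f > 0`. Hence it is increasing and bounded and converges to some `L ∈ (δ, 1]`. Along a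
convergent trajectory the derivative `f (a t) → f L` must vanish in the limit, so `f L = 0`,
forcing `L = 1`.
-/

open Filter Topology Set

/-- By backward uniqueness, a solution that reached a zero `c` of the field would be the constant
solution `c` from the start. -/
theorem ODE_solution_ne_of_apply_eq_zero {E : Type*} [NormedAddCommGroup E] [NormedSpace ℝ E]
    {f : E → E} (hf : LocallyLipschitz f) {x : ℝ → E}
    (hx : ∀ t, 0 ≤ t → HasDerivAt x (f (x t)) t) {c : E} (hc : f c = 0) (h0 : x 0 ≠ c)
    {t : ℝ} (ht : 0 ≤ t) : x t ≠ c := by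
  intro hxt
  have hcont : ContinuousOn x (Icc 0 t) := HasDerivAt.continuousOn fun s hs => hx s hs.1
  obtain ⟨K, hK⟩ := hf.locallyLipschitzOn.exists_lipschitzOnWith_of_compact
    (isCompact_Icc.image_of_continuousOn hcont)
  have hc_mem : c ∈ x '' Icc 0 t := ⟨t, ⟨ht, le_rfl⟩, hxt⟩
  have hconst : EqOn x (fun _ => c) (Icc 0 t) :=
    ODE_solution_unique_of_mem_Icc_left (v := fun _ => f) (fun _ _ => hK) hcont
      (fun s hs => (hx s hs.1.le).hasDerivWithinAt)
      (fun s hs => mem_image_of_mem x (Ioc_subset_Icc_self hs)) continuousOn_const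
      (fun s _ => hc ▸ hasDerivWithinAt_const s _ c) (fun _ _ => hc_mem) hxt
  exact h0 (hconst ⟨le_rfl, ht⟩)

theorem ODE_solution_mem_Ioo {f : ℝ → ℝ} (hf : LocallyLipschitz f) {x : ℝ → ℝ}
    (hx : ∀ t, 0 ≤ t → HasDerivAt x (f (x t)) t) {p q : ℝ} (hp : f p = 0) (hq : f q = 0)
    (h0 : x 0 ∈ Ioo p q) {t : ℝ} (ht : 0 ≤ t) : x t ∈ Ioo p q := by
  have hivt : uIcc (x 0) (x t) ⊆ x '' uIcc 0 t :=
    intermediate_value_uIcc (HasDerivAt.continuousOn fun s hs => hx s (by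
      rw [uIcc_of_le ht] at hs; exact hs.1))
  have hnot_mem : ∀ c, f c = 0 → x 0 ≠ c → c ∉ uIcc (x 0) (x t) := by
    intro c hc h0c hmem
    obtain ⟨s, hs, hxs⟩ := hivt hmem
    rw [uIcc_of_le ht] at hs
    exact ODE_solution_ne_of_apply_eq_zero hf hx hc h0c hs.1 hxs
  constructor
  · by_contra hle
    exact hnot_mem p hp h0.1.ne' (mem_uIcc.2 (Or.inr ⟨not_lt.1 hle, h0.1.le⟩))
  · by_contra hge
    exact hnot_mem q hq h0.2.ne (mem_uIcc.2 (Or.inl ⟨h0.2.le, not_lt.1 hge⟩))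

theorem exists_tendsto_atTop_of_monotoneOn_Ici {f : ℝ → ℝ} {a M : ℝ} (hf : MonotoneOn f (Ici a))
    (hM : ∀ t, a ≤ t → f t ≤ M) : ∃ L, Tendsto f atTop (𝓝 L) := by
  set g : ℝ → ℝ := fun t => f (max t a)
  have hg : Monotone g := fun s t hst =>
    hf (le_max_right s a) (le_max_right t a) (max_le_max_right a hst)
  refine ⟨⨆ t, g t, (tendsto_atTop_ciSup hg ⟨M, ?_⟩).congr' ?_⟩
  · rintro _ ⟨t, rfl⟩
    exact hM _ (le_max_right t a)
  · filter_upwards [eventually_ge_atTop a] with t ht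
    simp only [g, max_eq_left ht]

theorem eq_zero_of_tendsto_of_tendsto_deriv {x x' : ℝ → ℝ} {L m : ℝ}
    (hx : ∀ᶠ t in atTop, HasDerivAt x (x' t) t) (hL : Tendsto x atTop (𝓝 L))
    (hm : Tendsto x' atTop (𝓝 m)) : m = 0 := by
  by_contra hm0
  have hε : 0 < |m| / 2 := by positivity
  have hincr : Tendsto (fun t => x (t + 1) - x t) atTop (𝓝 0) := by
    simpa using (hL.comp (tendsto_atTop_add_const_right _ 1 tendsto_id)).sub hL
  obtain ⟨t, hderiv, hstep⟩ := (eventually_forall_ge_atTop.2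
    (hx.and (hm.eventually (Metric.ball_mem_nhds m hε)))).and
    (hincr.eventually (Metric.ball_mem_nhds 0 hε)) |>.exists
  -- the slope of `x` on `[t, t + 1]` is close to both `0` and `m`
  obtain ⟨s, hs, hslope⟩ := exists_hasDerivAt_eq_slope x x' (lt_add_one t)
    (HasDerivAt.continuousOn fun s hs => (hderiv s hs.1).1)
    (fun s hs => (hderiv s hs.1.le).1)
  have hxs := (hderiv s hs.1.le).2
  rw [hslope, add_sub_cancel_left, div_one] at hxs
  simp only [Real.dist_eq, sub_zero] at hxs hstep
  linarith [abs_sub_abs_le_abs_sub m (x (t + 1) - x t), abs_sub_comm m (x (t + 1) - x t)]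

theorem ODE_solution_tendsto_of_pos_on_Ioo {f : ℝ → ℝ} (hf : LocallyLipschitz f) {x : ℝ → ℝ}
    (hx : ∀ t, 0 ≤ t → HasDerivAt x (f (x t)) t) {p q : ℝ} (hp : f p = 0) (hq : f q = 0)
    (hpos : ∀ y ∈ Ioo p q, 0 < f y) (h0 : x 0 ∈ Ioo p q) : Tendsto x atTop (𝓝 q) := by
  have hmem : ∀ t, 0 ≤ t → x t ∈ Ioo p q := fun t => ODE_solution_mem_Ioo hf hx hp hq h0
  have hmono : MonotoneOn x (Ici 0) := by
    refine (strictMonoOn_of_deriv_pos (convex_Ici 0)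
      (HasDerivAt.continuousOn fun t ht => hx t ht) fun t ht => ?_).monotoneOn
    rw [interior_Ici] at ht
    rw [(hx t ht.le).deriv]
    exact hpos _ (hmem t ht.le)
  obtain ⟨L, hL⟩ := exists_tendsto_atTop_of_monotoneOn_Ici hmono fun t ht => (hmem t ht).2.le
  have hLq : L ≤ q := le_of_tendsto hL <| (eventually_ge_atTop 0).mono fun t ht => (hmem t ht).2.le
  have hpL : p < L := h0.1.trans_le <| ge_of_tendsto hL <|
    (eventually_ge_atTop 0).mono fun t ht => hmono self_mem_Ici ht ht
  have hfL : f L = 0 := eq_zero_of_tendsto_of_tendsto_deriv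
    ((eventually_ge_atTop 0).mono hx) hL ((hf.continuous.tendsto L).comp hL)
  obtain rfl : L = q := hLq.eq_of_not_lt fun hLq' => (hpos L ⟨hpL, hLq'⟩).ne' hfL
  exact hL

theorem Dgate_converges_to_one_general
    (R δ : ℝ) (hR : 0 < R) (hδ0 : 0 < δ)
    (a : ℝ → ℝ)
    (ha : ∀ t : ℝ, 0 ≤ t → HasDerivAt a (R * a t * (a t - δ) * (1 - a t)) t)
    (h0 : δ < a 0) (h0' : a 0 < 1) :
    Tendsto a atTop (𝓝 1) := by
  set f : ℝ → ℝ := fun y => R * y * (y - δ) * (1 - y)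
  have hf : LocallyLipschitz f := ContDiff.locallyLipschitz (𝕂 := ℝ) (by fun_prop)
  have hpos : ∀ y ∈ Ioo δ 1, 0 < f y := fun y hy => by
    have : 0 < y := hδ0.trans hy.1
    have : 0 < y - δ := sub_pos.2 hy.1
    have : 0 < 1 - y := sub_pos.2 hy.2
    positivity
  exact ODE_solution_tendsto_of_pos_on_Ioo hf ha (by simp [f]) (by simp [f]) hpos ⟨h0, h0'⟩

theorem Dgate_converges_to_one
    (R δ : ℝ) (hR : 0 < R) (hδ0 : 0 < δ) (hδ1 : δ < 1)
    (a : ℝ → ℝ)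
    (ha : ∀ t : ℝ, 0 ≤ t → HasDerivAt a (R * a t * (a t - δ) * (1 - a t)) t)
    (h0 : δ < a 0) (h0' : a 0 < 1) :
    Tendsto a atTop (𝓝 1) :=
  Dgate_converges_to_one_general R δ hR hδ0 a ha h0 h0'
end

section
/- Let R > 0 and 0 < δ < 1 be real numbers, and let a : ℝ → ℝ satisfy a'(t) = R · a(t) · (a(t) - δ) · (1 - a(t)) for all t ≥ 0 (in the sense of HasDerivAt), with 0 < a(0) < δ. Then for every t ≥ 0 the explicit solution formula holds: (a(t)/a(0))^(1/δ) · ((δ - a(t))/(δ - a(0)))^(-1/(δ·(1-δ))) · ((1 - a(t))/(1 - a(0)))^(1/(1-δ)) = exp(-R·t), where powers are real powers of positive bases. -/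
/-!
By partial fractions, `Φ(x) = log x / δ - log (δ - x) / (δ (1 - δ)) + log (1 - x) / (1 - δ)`
satisfies `Φ'(x) · x (x - δ) (1 - x) = -1`, so `Φ (a t) + R t` is constant along a solution and
exponentiating gives the formula. The logarithms make sense because `0` and `δ` are equilibria:
`a` and `δ - a` solve linear equations `y' = c y`, and by backward uniqueness a solution of such
an equation that vanishes at some time vanishes at all earlier times, so neither reaches `0`.
-/

open Set Real

theorem pos_of_hasDerivAt_eq_mul_self {h c : ℝ → ℝ} (hc : ContinuousOn c (Ici 0))
    (hd : ∀ t, 0 ≤ t → HasDerivAt h (c t * h t) t) (h0 : 0 < h 0) {t : ℝ} (ht : 0 ≤ t) :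
    0 < h t := by
  by_contra! hle
  have hcont : ContinuousOn h (Ici 0) := fun u hu => (hd u hu).continuousAt.continuousWithinAt
  obtain ⟨s, hs, hs0⟩ : ∃ s ∈ Icc 0 t, h s = 0 :=
    intermediate_value_Icc' ht (hcont.mono Icc_subset_Ici_self) ⟨hle, h0.le⟩
  obtain ⟨C, hC⟩ := (isCompact_Icc (a := 0) (b := s)).exists_bound_of_continuousOn
    (hc.mono Icc_subset_Ici_self)
  have hzero : EqOn h (fun _ => 0) (Icc 0 s) := by
    refine ODE_solution_unique_of_mem_Icc_left (v := fun u y => c u * y) (s := fun _ => univ)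
      (K := C.toNNReal) (fun u hu => ?_) (hcont.mono Icc_subset_Ici_self)
      (fun u hu => (hd u hu.1.le).hasDerivWithinAt) (fun _ _ => trivial)
      continuousOn_const (fun u _ => by simpa using hasDerivWithinAt_const u _ (0 : ℝ))
      (fun _ _ => trivial) (by simpa using hs0)
    refine ((lipschitzWith_smul (c u)).weaken ?_).lipschitzOnWith
    rw [← NNReal.coe_le_coe, coe_nnnorm, Real.coe_toNNReal']
    exact (hC u (Ioc_subset_Icc_self hu)).trans (le_max_left _ _)
  exact h0.ne' (hzero (left_mem_Icc.mpr hs.1))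

noncomputable def dgatePotential (δ x : ℝ) : ℝ :=
  log x / δ - log (δ - x) / (δ * (1 - δ)) + log (1 - x) / (1 - δ)

theorem hasDerivAt_dgatePotential {δ x : ℝ} (hδ : δ ≠ 0) (hδ1 : δ ≠ 1) (hx : x ≠ 0)
    (hxδ : x ≠ δ) (hx1 : x ≠ 1) :
    HasDerivAt (dgatePotential δ) (-1 / (x * (x - δ) * (1 - x))) x := by
  have hδx : δ - x ≠ 0 := sub_ne_zero.mpr hxδ.symm
  have h1x : 1 - x ≠ 0 := sub_ne_zero.mpr hx1.symm
  have hlog := (((hasDerivAt_id x).log hx).div_const δ).sub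
    ((((hasDerivAt_id x).const_sub δ).log hδx).div_const (δ * (1 - δ))) |>.add
    ((((hasDerivAt_id x).const_sub 1).log h1x).div_const (1 - δ))
  refine hlog.congr_deriv ?_
  have h1δ : 1 - δ ≠ 0 := sub_ne_zero.mpr (Ne.symm hδ1)
  have hxδ' : x - δ ≠ 0 := sub_ne_zero.mpr hxδ
  simp only [id_eq]
  field_simp
  ring

theorem dgate_mem_Ioo {R δ : ℝ} {a : ℝ → ℝ}
    (ha : ∀ t, 0 ≤ t → HasDerivAt a (R * a t * (a t - δ) * (1 - a t)) t)
    (h0 : 0 < a 0) (h0' : a 0 < δ) {t : ℝ} (ht : 0 ≤ t) : a t ∈ Ioo 0 δ := by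
  have hcont : ContinuousOn a (Ici 0) := fun u hu => (ha u hu).continuousAt.continuousWithinAt
  have hpos : 0 < a t :=
    pos_of_hasDerivAt_eq_mul_self (c := fun u => R * (a u - δ) * (1 - a u)) (by fun_prop)
      (fun u hu => (ha u hu).congr_deriv (by ring)) h0 ht
  have hgap : 0 < δ - a t :=
    pos_of_hasDerivAt_eq_mul_self (h := fun u => δ - a u) (c := fun u => R * a u * (1 - a u))
      (by fun_prop) (fun u hu => ((ha u hu).const_sub δ).congr_deriv (by ring)) (by linarith) ht
  exact ⟨hpos, by linarith⟩

theorem dgatePotential_add_mul_eq {R δ : ℝ} {a : ℝ → ℝ} (hδ1 : δ < 1)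
    (ha : ∀ t, 0 ≤ t → HasDerivAt a (R * a t * (a t - δ) * (1 - a t)) t)
    (h0 : 0 < a 0) (h0' : a 0 < δ) {t : ℝ} (ht : 0 ≤ t) :
    dgatePotential δ (a t) + R * t = dgatePotential δ (a 0) := by
  have hderiv : ∀ u, 0 ≤ u → HasDerivAt (fun u => dgatePotential δ (a u) + R * u) 0 u := by
    intro u hu
    obtain ⟨hau, hauδ⟩ := dgate_mem_Ioo ha h0 h0' hu
    have hau_sub : a u - δ ≠ 0 := by linarith
    have hsub_au : 1 - a u ≠ 0 := by linarith
    have := ((hasDerivAt_dgatePotential (h0.trans h0').ne' hδ1.ne hau.ne' hauδ.ne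
      (by linarith)).comp u (ha u hu)).add ((hasDerivAt_id u).const_mul R)
    refine this.congr_deriv ?_
    field_simp
    ring
  simpa using constant_of_has_deriv_right_zero
    (fun u hu => (hderiv u hu.1).continuousAt.continuousWithinAt)
    (fun u hu => (hderiv u hu.1).hasDerivWithinAt) t (right_mem_Icc.mpr ht)

theorem dgate_rpow_ratios_eq_exp {δ x x₀ : ℝ} (hx : 0 < x) (hxδ : 0 < δ - x) (hx1 : 0 < 1 - x)
    (hx₀ : 0 < x₀) (hx₀δ : 0 < δ - x₀) (hx₀1 : 0 < 1 - x₀) :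
    (x / x₀) ^ (1 / δ) * ((δ - x) / (δ - x₀)) ^ (-(1 / (δ * (1 - δ)))) *
      ((1 - x) / (1 - x₀)) ^ (1 / (1 - δ)) = exp (dgatePotential δ x - dgatePotential δ x₀) := by
  rw [rpow_def_of_pos (div_pos hx hx₀), rpow_def_of_pos (div_pos hxδ hx₀δ),
    rpow_def_of_pos (div_pos hx1 hx₀1), ← exp_add, ← exp_add, log_div hx.ne' hx₀.ne',
    log_div hxδ.ne' hx₀δ.ne', log_div hx1.ne' hx₀1.ne', dgatePotential, dgatePotential]
  ring_nf

theorem Dgate_explicit_solution_below_general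
    (R δ : ℝ) (hδ1 : δ < 1)
    (a : ℝ → ℝ)
    (ha : ∀ t : ℝ, 0 ≤ t → HasDerivAt a (R * a t * (a t - δ) * (1 - a t)) t)
    (h0 : 0 < a 0) (h0' : a 0 < δ) :
    ∀ t : ℝ, 0 ≤ t →
      (a t / a 0) ^ (1 / δ) *
        ((δ - a t) / (δ - a 0)) ^ (-(1 / (δ * (1 - δ)))) *
        ((1 - a t) / (1 - a 0)) ^ (1 / (1 - δ)) = Real.exp (-(R * t)) := by
  intro t ht
  obtain ⟨hat, hatδ⟩ := dgate_mem_Ioo ha h0 h0' ht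
  rw [dgate_rpow_ratios_eq_exp hat (by linarith) (by linarith) h0 (by linarith) (by linarith),
    ← dgatePotential_add_mul_eq hδ1 ha h0 h0' ht]
  ring_nf

theorem Dgate_explicit_solution_below
    (R δ : ℝ) (hR : 0 < R) (hδ0 : 0 < δ) (hδ1 : δ < 1)
    (a : ℝ → ℝ)
    (ha : ∀ t : ℝ, 0 ≤ t → HasDerivAt a (R * a t * (a t - δ) * (1 - a t)) t)
    (h0 : 0 < a 0) (h0' : a 0 < δ) :
    ∀ t : ℝ, 0 ≤ t →
      (a t / a 0) ^ (1 / δ) *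
        ((δ - a t) / (δ - a 0)) ^ (-(1 / (δ * (1 - δ)))) *
        ((1 - a t) / (1 - a 0)) ^ (1 / (1 - δ)) = Real.exp (-(R * t)) :=
  Dgate_explicit_solution_below_general R δ hδ1 a ha h0 h0'
end

section
/- Let 0 < δ₀ < δ < 1 and let ε > 0 and T > 0 be real numbers. Then there exists R₀ > 0 such that for every R ≥ R₀ and every a : ℝ → ℝ satisfying a'(t) = R · a(t) · (a(t) - δ) · (1 - a(t)) for all t ≥ 0 (in the sense of HasDerivAt) with 0 < a(0) ≤ δ₀, one has a(T) < ε. -/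
theorem Dgate_rate_for_convergence_to_zero
    (δ₀ δ ε T : ℝ) (h0 : 0 < δ₀) (h1 : δ₀ < δ) (h2 : δ < 1)
    (hε : 0 < ε) (hT : 0 < T) :
    ∃ R₀ : ℝ, 0 < R₀ ∧ ∀ R : ℝ, R₀ ≤ R → ∀ a : ℝ → ℝ,
      (∀ t : ℝ, 0 ≤ t → HasDerivAt a (R * a t * (a t - δ) * (1 - a t)) t) →
      0 < a 0 → a 0 ≤ δ₀ → a T < ε := by
  set c : ℝ := (δ - δ₀) * (1 - δ₀) with hc
  have hcpos : 0 < c := mul_pos (by linarith) (by linarith)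
  set L : ℝ := Real.log (δ₀ / ε) with hL
  refine ⟨max 1 ((L + 1) * 2 / (c * T)), lt_of_lt_of_le one_pos (le_max_left _ _),
    fun R hR a ha ha0 ha0' => ?_⟩
  have hR1 : (1 : ℝ) ≤ R := le_trans (le_max_left _ _) hR
  have hRpos : 0 < R := lt_of_lt_of_le one_pos hR1
  have hRL : (L + 1) * 2 / (c * T) ≤ R := le_trans (le_max_right _ _) hR
  have hcT : 0 < c * T := mul_pos hcpos hT
  -- the exponential barrier
  set k : ℝ := -(c / 2) * R with hk
  have hkneg : k < 0 := by
    rw [hk]; nlinarith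
  set B : ℝ → ℝ := fun t => δ₀ * Real.exp (k * t) with hB
  have hB' : ∀ x : ℝ, HasDerivAt B (δ₀ * (k * Real.exp (k * x))) x := by
    intro x
    have h := (((hasDerivAt_id x).const_mul k).exp.const_mul δ₀)
    have heq : (fun y : ℝ => δ₀ * Real.exp (k * id y)) = B := by
      funext y; simp [hB]
    rw [heq] at h
    simpa [mul_comm, mul_left_comm, mul_assoc] using h
  have key : ∀ x ∈ Set.Icc (0 : ℝ) T, a x ≤ B x := by
    have hcont : ContinuousOn a (Set.Icc 0 T) :=
      fun x hx => ((ha x hx.1).continuousAt).continuousWithinAt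
    have hderiv : ∀ x ∈ Set.Ico (0:ℝ) T,
        HasDerivWithinAt a (R * a x * (a x - δ) * (1 - a x)) (Set.Ici x) x :=
      fun x hx => (ha x hx.1).hasDerivWithinAt
    have hinit : a 0 ≤ B 0 := by simpa [hB] using ha0'
    refine image_le_of_deriv_right_lt_deriv_boundary hcont hderiv hinit hB' ?_
    intro x hx hax
    have hexp : Real.exp (k * x) ≤ 1 := by
      apply Real.exp_le_one_iff.2
      exact mul_nonpos_of_nonpos_of_nonneg hkneg.le hx.1
    have hBpos : 0 < B x := mul_pos h0 (Real.exp_pos _)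
    have hax0 : 0 < a x := hax ▸ hBpos
    have haxδ₀ : a x ≤ δ₀ := by
      have hb : B x ≤ δ₀ := by simp only [hB]; nlinarith
      linarith [hax ▸ hb]
    have hBx : δ₀ * (k * Real.exp (k * x)) = k * a x := by
      rw [hax]; simp only [hB]; ring
    rw [hBx, hk]
    -- R * a x * (a x - δ) * (1 - a x) < -(c/2) * R * a x
    have h5 : (a x - δ) * (1 - a x) ≤ -c := by nlinarith
    nlinarith [mul_pos hRpos hax0]
  have hfin : a T ≤ δ₀ * Real.exp (k * T) := key T ⟨hT.le, le_refl T⟩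
  have hkT : k * T ≤ -(L + 1) := by
    have : (L + 1) * 2 / (c * T) * (c * T) ≤ R * (c * T) :=
      mul_le_mul_of_nonneg_right hRL hcT.le
    rw [div_mul_cancel₀ _ hcT.ne'] at this
    rw [hk]; nlinarith
  have hεδ : Real.exp (-L) = ε / δ₀ := by
    rw [hL, ← Real.log_inv, Real.exp_log (by positivity), inv_div]
  have : Real.exp (k * T) < ε / δ₀ := by
    calc Real.exp (k * T) ≤ Real.exp (-(L + 1)) := Real.exp_le_exp.2 hkT
      _ < Real.exp (-L) := Real.exp_lt_exp.2 (by linarith)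
      _ = ε / δ₀ := hεδ
  calc a T ≤ δ₀ * Real.exp (k * T) := hfin
    _ < δ₀ * (ε / δ₀) := by exact mul_lt_mul_of_pos_left this h0
    _ = ε := by field_simp
end

section
/- Let 0 < δ < δ₁ < 1 and let ε > 0 and T > 0 be real numbers. Then there exists R₁ > 0 such that for every R ≥ R₁ and every a : ℝ → ℝ satisfying a'(t) = R · a(t) · (a(t) - δ) · (1 - a(t)) for all t ≥ 0 (in the sense of HasDerivAt) with δ₁ ≤ a(0) < 1, one has 1 - a(T) < ε. -/
/-!
Above the threshold the vector field is positive at the level `δ₁`, so a solution starting in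
`[δ₁, 1)` never drops below `δ₁`. There `a (a - δ) ≥ δ₁ (δ₁ - δ)`, so `1 - a` solves a linear
equation `g' = -m g` with rate `m ≥ R δ₁ (δ₁ - δ)`, and comparison with an exponential gives
`1 - a T ≤ exp (-R δ₁ (δ₁ - δ) T / 2)`, which is below `ε` once `R` is large (the factor `1/2`
leaves room for the strict derivative inequality the fencing theorem needs). Both steps are
fencing arguments, so no uniqueness theorem for the ODE is needed.
-/

open Real Set

theorem le_of_hasDerivAt_of_eq_imp_pos {f f' : ℝ → ℝ} {c : ℝ}
    (hf : ∀ t, 0 ≤ t → HasDerivAt f (f' t) t) (h0 : c ≤ f 0)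
    (hc : ∀ t, 0 ≤ t → f t = c → 0 < f' t) {t : ℝ} (ht : 0 ≤ t) : c ≤ f t :=
  image_le_of_deriv_right_lt_deriv_boundary' (f := fun _ => c) (f' := fun _ => 0)
    continuousOn_const (fun _ _ => hasDerivWithinAt_const _ _ c) h0
    (fun x hx => (hf x hx.1).continuousAt.continuousWithinAt)
    (fun x hx => (hf x hx.1).hasDerivWithinAt) (fun x hx hfx => hc x hx.1 hfx.symm) ⟨ht, le_rfl⟩

theorem le_mul_exp_neg_of_hasDerivAt_neg_mul {g m : ℝ → ℝ} {κ : ℝ}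
    (hg : ∀ t, 0 ≤ t → HasDerivAt g (-(m t * g t)) t) (hm : ∀ t, 0 ≤ t → κ < m t)
    (h0 : 0 < g 0) {t : ℝ} (ht : 0 ≤ t) : g t ≤ g 0 * exp (-κ * t) := by
  have hB : ∀ x, HasDerivAt (fun s => g 0 * exp (-κ * s)) (-(κ * (g 0 * exp (-κ * x)))) x :=
    fun x => ((((hasDerivAt_id' x).const_mul (-κ)).exp).const_mul (g 0)).congr_deriv (by ring)
  refine image_le_of_deriv_right_lt_deriv_boundary
    (fun x hx => (hg x hx.1).continuousAt.continuousWithinAt)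
    (fun x hx => (hg x hx.1).hasDerivWithinAt) (by simp) hB (fun x hx hgx => ?_) ⟨ht, le_rfl⟩
  have hBx : 0 < g 0 * exp (-κ * x) := mul_pos h0 (exp_pos _)
  rw [hgx, neg_lt_neg_iff]
  exact mul_lt_mul_of_pos_right (hm x hx.1) hBx

section Dgate

variable {R δ c : ℝ} {a : ℝ → ℝ}

theorem Dgate_le_of_threshold_lt (hR : 0 < R) (hc : 0 < c) (hδc : δ < c) (hc1 : c < 1)
    (ha : ∀ t, 0 ≤ t → HasDerivAt a (R * a t * (a t - δ) * (1 - a t)) t) (ha0 : c ≤ a 0)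
    {t : ℝ} (ht : 0 ≤ t) : c ≤ a t :=
  le_of_hasDerivAt_of_eq_imp_pos ha ha0 (fun s _ hs => by
    rw [hs]
    exact mul_pos (mul_pos (mul_pos hR hc) (sub_pos.2 hδc)) (sub_pos.2 hc1)) ht

theorem Dgate_one_sub_le (hR : 0 < R) (hc : 0 < c) (hδc : δ < c) (hc1 : c < 1)
    (ha : ∀ t, 0 ≤ t → HasDerivAt a (R * a t * (a t - δ) * (1 - a t)) t) (ha0 : c ≤ a 0)
    (ha01 : a 0 < 1) {κ : ℝ} (hκ : κ < R * (c * (c - δ))) {t : ℝ} (ht : 0 ≤ t) :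
    1 - a t ≤ (1 - a 0) * exp (-κ * t) := by
  refine le_mul_exp_neg_of_hasDerivAt_neg_mul (m := fun s => R * (a s * (a s - δ)))
    (fun s hs => ((ha s hs).const_sub 1).congr_deriv (by ring)) (fun s hs => ?_)
    (sub_pos.2 ha01) ht
  have has : c ≤ a s := Dgate_le_of_threshold_lt hR hc hδc hc1 ha ha0 hs
  have : c * (c - δ) ≤ a s * (a s - δ) :=
    mul_le_mul has (by linarith) (by linarith) (by linarith)
  exact hκ.trans_le (mul_le_mul_of_nonneg_left this hR.le)

end Dgate

theorem Dgate_rate_for_convergence_to_one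
    (δ δ₁ ε T : ℝ) (h0 : 0 < δ) (h1 : δ < δ₁) (h2 : δ₁ < 1)
    (hε : 0 < ε) (hT : 0 < T) :
    ∃ R₁ : ℝ, 0 < R₁ ∧ ∀ R : ℝ, R₁ ≤ R → ∀ a : ℝ → ℝ,
      (∀ t : ℝ, 0 ≤ t → HasDerivAt a (R * a t * (a t - δ) * (1 - a t)) t) →
      δ₁ ≤ a 0 → a 0 < 1 → 1 - a T < ε := by
  have hδ₁ : 0 < δ₁ := h0.trans h1
  set k := δ₁ * (δ₁ - δ) / 2
  have hk : 0 < k := half_pos (mul_pos hδ₁ (sub_pos.2 h1))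
  have hR₁ : 0 < (|log ε| + 1) / (k * T) := by positivity
  refine ⟨_, hR₁, fun R hR a ha ha0 ha01 => ?_⟩
  have hR0 : 0 < R := hR₁.trans_le hR
  have hRkT : |log ε| + 1 ≤ R * k * T := by
    rwa [div_le_iff₀ (mul_pos hk hT), ← mul_assoc] at hR
  have hdecay := Dgate_one_sub_le hR0 hδ₁ h1 h2 ha ha0 ha01
    (mul_lt_mul_of_pos_left (half_lt_self (mul_pos hδ₁ (sub_pos.2 h1))) hR0) hT.le
  calc 1 - a T ≤ (1 - a 0) * exp (-(R * k) * T) := hdecay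
    _ < exp (-(R * k) * T) := mul_lt_of_lt_one_left (exp_pos _) (by linarith)
    _ < exp (log ε) := exp_lt_exp.2 (by linarith [neg_abs_le (log ε)])
    _ = ε := exp_log hε
end
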